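/- arXiv:1302.0587 — 10 statements merged into one kernel-verified Lean document; each statement's English description precedes it below -/
import Mathlib

section
/- Let p and q be relatively prime odd integers with p ≥ 3 and 0 < q < p. Then d(4p³ − p, (4p² − 1)q + 2p) = d(p, q) + 2 and d(4p³ − p, (4p² − 1)q − 2p) = d(p, q) − 2. -/
/-!
Write `P = p(4p² - 1)`, `Q = (4p² - 1)q + 2p` and let `S(P, Q)` count the `k ∈ [0, P)` with
`⌊Qk/P⌋` odd, so that `d(P, Q) = 2 S(P, Q) - (P - 1)`. Since `Q` is odd, `k ↦ P + k` flips
these parities, so `S(P, Q)` is the count over `[0, 4p³)` minus `p - S(p, q)`. For `k = u + 2pt`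
with `0 ≤ u < 2p`, `0 ≤ t < 2p²` one has `⌊Qk/P⌋ = ⌊qu/p⌋ + 2qt + ⌊(W + 4p²t)/P⌋`, where
`W = (4p² - 1)(qu mod p) + 2pu`. As `t` runs, the last floor takes each odd value
`1, 3, …, 2p - 1` exactly `p` times, except that `2p - 1` is taken only `p - 1` times when
`u = p`. Summing, `S(P, Q) = 2p³ - p + 1 + S(p, q)`, which is the first identity. The second is
the first one for `2p - q`, through the reflection `d(P, 2P - Q) = -d(P, Q)` for coprime `P`, `Q`.
-/

/-- For integers `p > q > 0`, the diagonal element `d(p, q)` of the linking matrix of the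
dihedral covering link of the 2-bridge knot `b(p,q)`:
`d(p, q) = −∑_{k=1}^{p−1} (−1)^{⌊q·k/p⌋}`. -/
noncomputable def diagElem (p q : ℤ) : ℤ :=
  -∑ k ∈ Finset.Icc (1 : ℤ) (p - 1), ((⌊(q : ℚ) * (k : ℚ) / (p : ℚ)⌋).negOnePow : ℤ)

open Finset

noncomputable def oddFloorCount (P Q : ℤ) : ℤ := ∑ k ∈ Ico 0 P, Q * k / P % 2

lemma Int.coe_negOnePow_eq_one_sub_two_mul_emod_two (n : ℤ) :
    (n.negOnePow : ℤ) = 1 - 2 * (n % 2) := by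
  rcases Int.even_or_odd n with h | h
  · rw [Int.negOnePow_even n h, Int.even_iff.mp h]; rfl
  · rw [Int.negOnePow_odd n h, Int.odd_iff.mp h]; rfl

lemma Int.floor_intCast_div_intCast (a : ℤ) {b : ℤ} (hb : 0 < b) :
    ⌊(a : ℚ) / (b : ℚ)⌋ = a / b := by
  lift b to ℕ using hb.le
  exact_mod_cast Rat.floor_intCast_div_natCast a b

lemma diagElem_eq_two_mul_oddFloorCount {p : ℤ} (hp : 0 < p) (q : ℤ) :
    diagElem p q = 2 * oddFloorCount p q - (p - 1) := by
  have hIcc : Icc 1 (p - 1) = Ioo 0 p := by ext; simp only [mem_Icc, mem_Ioo]; omega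
  rw [diagElem, oddFloorCount, ← Ioo_insert_left hp, sum_insert left_notMem_Ioo, hIcc]
  simp only [← Int.cast_mul, Int.floor_intCast_div_intCast _ hp,
    Int.coe_negOnePow_eq_one_sub_two_mul_emod_two, sum_sub_distrib, ← mul_sum, sum_const,
    Int.card_Ioo, mul_zero, Int.zero_ediv, Int.zero_emod, zero_add]
  rw [nsmul_eq_mul, mul_one, Int.toNat_of_nonneg (by omega)]
  ring

lemma oddFloorCount_two_mul_sub {P Q : ℤ} (hP : 0 < P) (hcop : IsCoprime P Q) :
    oddFloorCount P (2 * P - Q) = P - 1 - oddFloorCount P Q := by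
  have hterm : ∀ k ∈ Ioo 0 P, (2 * P - Q) * k / P % 2 = 1 - Q * k / P % 2 := by
    intro k hk
    obtain ⟨hk0, hkP⟩ := mem_Ioo.mp hk
    have hnd : ¬ P ∣ Q * k := fun h => by
      have := Int.le_of_dvd hk0 (hcop.dvd_of_dvd_mul_left h)
      omega
    rw [show (2 * P - Q) * k = -(Q * k) + P * (2 * k) by ring,
      Int.add_mul_ediv_left _ _ hP.ne', Int.neg_ediv, if_neg hnd, Int.sign_eq_one_of_pos hP]
    omega
  rw [oddFloorCount, oddFloorCount, ← Ioo_insert_left hP, sum_insert left_notMem_Ioo,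
    sum_insert left_notMem_Ioo, sum_congr rfl hterm, sum_sub_distrib, sum_const, Int.card_Ioo,
    nsmul_eq_mul, sub_zero, Int.toNat_of_nonneg (by omega)]
  simp

lemma diagElem_two_mul_sub {P Q : ℤ} (hP : 0 < P) (hcop : IsCoprime P Q) :
    diagElem P (2 * P - Q) = -diagElem P Q := by
  rw [diagElem_eq_two_mul_oddFloorCount hP, diagElem_eq_two_mul_oddFloorCount hP,
    oddFloorCount_two_mul_sub hP hcop]
  ring

lemma sum_Ico_mul_eq_sum_sum {M : Type*} [AddCommMonoid M] {b : ℤ} (hb : 0 < b) (c : ℤ)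
    (f : ℤ → M) : ∑ k ∈ Ico 0 (b * c), f k = ∑ u ∈ Ico 0 b, ∑ t ∈ Ico 0 c, f (u + b * t) := by
  rw [← sum_product']
  refine sum_nbij' (fun k => (k % b, k / b)) (fun x => x.1 + b * x.2) ?_ ?_ ?_ ?_ ?_
  · intro k hk
    simp only [mem_Ico, mem_product] at hk ⊢
    refine ⟨⟨Int.emod_nonneg k hb.ne', Int.emod_lt_of_pos k hb⟩, Int.ediv_nonneg hk.1 hb.le, ?_⟩
    rw [Int.ediv_lt_iff_lt_mul hb]; linarith
  · rintro ⟨u, t⟩ hx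
    simp only [mem_Ico, mem_product] at hx ⊢
    constructor <;> nlinarith
  · intro k _
    exact Int.emod_add_mul_ediv k b
  · rintro ⟨u, t⟩ hx
    simp only [mem_Ico, mem_product] at hx
    rw [Int.add_mul_emod_self_left, Int.emod_eq_of_lt hx.1.1 hx.1.2,
      Int.add_mul_ediv_left _ _ hb.ne', Int.ediv_eq_zero_of_lt hx.1.1 hx.1.2, zero_add]
  · intro k _
    rw [Int.emod_add_mul_ediv]

lemma Int.mul_add_ediv_emod_two_of_odd {Q : ℤ} (hQ : Odd Q) {P : ℤ} (hP : P ≠ 0) (v : ℤ) :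
    Q * (P + v) / P % 2 = 1 - Q * v / P % 2 := by
  obtain ⟨s, rfl⟩ := hQ
  rw [show (2 * s + 1) * (P + v) = (2 * s + 1) * v + P * (2 * s + 1) by ring,
    Int.add_mul_ediv_left _ _ hP]
  omega

lemma Int.add_two_mul_add_emod_two (a b c : ℤ) :
    (a + 2 * b + c) % 2 = a % 2 + (1 - 2 * (a % 2)) * (c % 2) := by
  rcases Int.emod_two_eq a with ha | ha <;> rcases Int.emod_two_eq c with hc | hc <;>
    rw [ha, hc] <;> omega

lemma mul_add_ediv_eq {N p : ℤ} (hN : N ≠ 0) (hp : p ≠ 0) (q u t : ℤ) :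
    (N * q + 2 * p) * (u + 2 * p * t) / (p * N) =
      q * u / p + 2 * (q * t) + (N * (q * u % p) + 2 * p * u + 4 * p ^ 2 * t) / (p * N) := by
  rw [show (N * q + 2 * p) * (u + 2 * p * t) =
      N * (q * u % p) + 2 * p * u + 4 * p ^ 2 * t + p * N * (q * u / p + 2 * (q * t)) by
        linear_combination N * (Int.mul_ediv_add_emod (q * u) p).symm,
    Int.add_mul_ediv_left _ _ (mul_ne_zero hp hN)]
  ring

lemma Int.ediv_sub_ediv_sub_of_le {m c : ℤ} (hm : 0 < m) (hc0 : 0 ≤ c) (hcm : c ≤ m) (y : ℤ) :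
    y / m - (y - c) / m = if y % m < c then 1 else 0 := by
  have hy := Int.mul_ediv_add_emod y m
  have h0 := Int.emod_nonneg y hm.ne'
  have h1 := Int.emod_lt_of_pos y hm
  split_ifs with h
  · have : (y - c) / m = y / m - 1 := by
      rw [Int.ediv_eq_iff_of_pos hm]; constructor <;> nlinarith
    omega
  · have : (y - c) / m = y / m := by
      rw [Int.ediv_eq_iff_of_pos hm]; constructor <;> nlinarith
    omega

lemma Int.card_filter_ediv_eq {m P W T n : ℤ} (hm : 0 < m) (hP : 0 < P) (hlo : W ≤ n * P)
    (hhi : (n + 1) * P ≤ W + m * T) :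
    (#{t ∈ Ico 0 T | (W + m * t) / P = n} : ℤ) =
      ((n + 1) * P - W - 1) / m - (n * P - W - 1) / m := by
  have hset : {t ∈ Ico 0 T | (W + m * t) / P = n} =
      Ico ((n * P - W - 1) / m + 1) (((n + 1) * P - W - 1) / m + 1) := by
    ext t
    simp only [mem_filter, mem_Ico, Int.ediv_eq_iff_of_pos hP, Int.add_one_le_iff,
      Int.lt_add_one_iff, Int.ediv_lt_iff_lt_mul hm, Int.le_ediv_iff_mul_le hm]
    constructor
    · rintro ⟨-, h1, h2⟩; constructor <;> linarith
    · rintro ⟨h1, h2⟩; refine ⟨⟨?_, ?_⟩, ?_, ?_⟩ <;> nlinarith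
  rw [hset, Int.card_Ico, Int.toNat_of_nonneg]
  · ring
  · have := Int.ediv_le_ediv hm (by nlinarith : n * P - W - 1 ≤ (n + 1) * P - W - 1)
    omega

/-- With `P = p * (m - 1)`: `[nP, nP + pm)` holds exactly `p` terms of the progression `W + m * t`,
and the `p` points cut off to get `[nP, nP + P)` hold one exactly when `[nP - p, nP)` does. -/
lemma Int.card_filter_ediv_mul_sub_one_eq {m p W T n : ℤ} (hp : 0 < p) (hpm : p < m)
    (hlo : W ≤ n * (p * (m - 1))) (hhi : (n + 1) * (p * (m - 1)) ≤ W + m * T) :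
    (#{t ∈ Ico 0 T | (W + m * t) / (p * (m - 1)) = n} : ℤ) =
      p - if (n * (p * (m - 1)) - W - 1) % m < p then 1 else 0 := by
  have hm : 0 < m := hp.trans hpm
  rw [Int.card_filter_ediv_eq hm (by nlinarith) hlo hhi,
    ← Int.ediv_sub_ediv_sub_of_le hm hp.le hpm.le,
    show (n + 1) * (p * (m - 1)) - W - 1 = n * (p * (m - 1)) - W - 1 - p + m * p by ring,
    Int.add_mul_ediv_left _ _ hm.ne']
  ring

lemma Int.emod_two_eq_sum_ite {c K : ℤ} (hc0 : 0 ≤ c) (hcK : c ≤ 2 * K) :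
    c % 2 = ∑ i ∈ Ico 0 K, if c = 2 * i + 1 then 1 else 0 := by
  rcases Int.emod_two_eq c with h | h
  · rw [h, eq_comm]
    exact sum_eq_zero fun i _ => if_neg (by omega)
  · have hc : ∀ i, c = 2 * i + 1 ↔ c / 2 = i := fun i => by omega
    simp only [hc, sum_ite_eq, mem_Ico]
    rw [if_pos (by omega), h]

lemma sum_ediv_emod_two_eq {p W : ℤ} (hp : 0 < p) (hW0 : 0 ≤ W)
    (hWP : W ≤ p * (4 * p ^ 2 - 1)) :
    ∑ t ∈ Ico 0 (2 * p ^ 2), (W + 4 * p ^ 2 * t) / (p * (4 * p ^ 2 - 1)) % 2 =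
      p * p - ∑ i ∈ Ico 0 p,
        if ((2 * i + 1) * (p * (4 * p ^ 2 - 1)) - W - 1) % (4 * p ^ 2) < p then 1 else 0 := by
  have hP : 0 < p * (4 * p ^ 2 - 1) := by nlinarith
  calc ∑ t ∈ Ico 0 (2 * p ^ 2), (W + 4 * p ^ 2 * t) / (p * (4 * p ^ 2 - 1)) % 2
      = ∑ t ∈ Ico 0 (2 * p ^ 2), ∑ i ∈ Ico 0 p,
          if (W + 4 * p ^ 2 * t) / (p * (4 * p ^ 2 - 1)) = 2 * i + 1 then 1 else 0 := by
        refine sum_congr rfl fun t ht => Int.emod_two_eq_sum_ite ?_ ?_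
        · simp only [mem_Ico] at ht
          exact Int.ediv_nonneg (by nlinarith) hP.le
        · simp only [mem_Ico] at ht
          rw [← Int.lt_add_one_iff, Int.ediv_lt_iff_lt_mul hP]
          nlinarith
    _ = ∑ i ∈ Ico 0 p, (p - if ((2 * i + 1) * (p * (4 * p ^ 2 - 1)) - W - 1) % (4 * p ^ 2) < p
          then 1 else 0) := by
        rw [sum_comm]
        refine sum_congr rfl fun i hi => ?_
        simp only [mem_Ico] at hi
        rw [sum_boole, Int.card_filter_ediv_mul_sub_one_eq hp (by nlinarith) (by nlinarith)
          (by nlinarith)]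
    _ = _ := by
        rw [sum_sub_distrib, sum_const, Int.card_Ico, nsmul_eq_mul, sub_zero,
          Int.toNat_of_nonneg hp.le]

lemma emod_four_mul_sq_lt_iff {p r u i : ℤ} (hp : 0 < p) (hr0 : 0 ≤ r) (hrp : r < p)
    (hu0 : 0 ≤ u) (hu : u < 2 * p) (hi0 : 0 ≤ i) (hi : i < p) :
    (r - 1 - p * (2 * u + 2 * i + 1)) % (4 * p ^ 2) < p ↔ r = 0 ∧ u + i + 1 = 2 * p := by
  -- A remainder below `p` is `r - 1` modulo `p`, hence `r - 1` itself or, if `r = 0`, `p - 1`;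
  -- the first case would make `4p` divide the odd number `2u + 2i + 1`.
  have hm : 0 < 4 * p ^ 2 := by positivity
  constructor
  · intro hw
    set J := r - 1 - p * (2 * u + 2 * i + 1)
    have hJ := Int.mul_ediv_add_emod J (4 * p ^ 2)
    have hw0 := Int.emod_nonneg J hm.ne'
    set c := J / (4 * p ^ 2)
    set s := 2 * u + 2 * i + 1 + 4 * (p * c)
    have hs : r - 1 - J % (4 * p ^ 2) = p * s := by linear_combination -hJ
    have hs1 : -1 ≤ s := by by_contra! h; nlinarith
    have hs2 : s < 1 := by by_contra! h; nlinarith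
    obtain hs' : s = -1 := by omega
    rw [hs'] at hs
    have hc1 : c < 0 := by by_contra! h; nlinarith
    have hc2 : -1 ≤ c := by by_contra! h; nlinarith
    have hpc : p * c = -p := by rw [show c = -1 by omega]; ring
    omega
  · rintro ⟨rfl, hui⟩
    rw [show 0 - 1 - p * (2 * u + 2 * i + 1) = p - 1 + 4 * p ^ 2 * (-1) by
        linear_combination (-2 * p) * hui,
      Int.add_mul_emod_self_left, Int.emod_eq_of_lt (by omega) (by nlinarith)]
    omega

lemma emod_four_mul_sq_lt_iff_of_isCoprime {p q u i : ℤ} (hp : 0 < p) (hcop : IsCoprime p q)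
    (hu0 : 0 ≤ u) (hu : u < 2 * p) (hi0 : 0 ≤ i) (hi : i < p) :
    ((2 * i + 1) * (p * (4 * p ^ 2 - 1)) - ((4 * p ^ 2 - 1) * (q * u % p) + 2 * p * u) - 1)
      % (4 * p ^ 2) < p ↔ u = p ∧ i = p - 1 := by
  have hr0 := Int.emod_nonneg (q * u) hp.ne'
  have hrp := Int.emod_lt_of_pos (q * u) hp
  rw [show (2 * i + 1) * (p * (4 * p ^ 2 - 1)) - ((4 * p ^ 2 - 1) * (q * u % p) + 2 * p * u) - 1
      = q * u % p - 1 - p * (2 * u + 2 * i + 1) + 4 * p ^ 2 * ((2 * i + 1) * p - q * u % p) by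
        ring,
    Int.add_mul_emod_self_left, emod_four_mul_sq_lt_iff hp hr0 hrp hu0 hu hi0 hi,
    ← Int.dvd_iff_emod_eq_zero]
  constructor
  · rintro ⟨hdvd, hui⟩
    obtain ⟨d, rfl⟩ := hcop.dvd_of_dvd_mul_left hdvd
    have hd0 : 0 < d := by nlinarith
    have hd1 : d < 2 := by nlinarith
    obtain rfl : d = 1 := by omega
    omega
  · rintro ⟨rfl, hi⟩
    exact ⟨dvd_mul_left u q, by omega⟩

lemma sum_Ico_two_mul_sq_emod_two {p q u : ℤ} (hp : 0 < p) (hcop : IsCoprime p q)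
    (hu0 : 0 ≤ u) (hu : u < 2 * p) :
    ∑ t ∈ Ico 0 (2 * p ^ 2),
        ((4 * p ^ 2 - 1) * q + 2 * p) * (u + 2 * p * t) / (p * (4 * p ^ 2 - 1)) % 2 =
      p * p - (1 - 2 * (q * u / p % 2)) * if u = p then 1 else 0 := by
  have hr0 := Int.emod_nonneg (q * u) hp.ne'
  have hrp := Int.emod_lt_of_pos (q * u) hp
  have hN : 0 ≤ 4 * p ^ 2 - 1 := by nlinarith
  have hexc : ∑ i ∈ Ico 0 p, (if ((2 * i + 1) * (p * (4 * p ^ 2 - 1)) -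
      ((4 * p ^ 2 - 1) * (q * u % p) + 2 * p * u) - 1) % (4 * p ^ 2) < p then 1 else 0 : ℤ) =
      if u = p then 1 else 0 := by
    rw [sum_congr rfl fun i hi => if_congr (emod_four_mul_sq_lt_iff_of_isCoprime hp hcop hu0 hu
      (mem_Ico.mp hi).1 (mem_Ico.mp hi).2) rfl rfl]
    by_cases hup : u = p
    · simp only [hup, true_and, if_true]
      rw [sum_ite_eq', if_pos (mem_Ico.mpr ⟨by omega, by omega⟩)]
    · simp [hup]
  simp_rw [mul_add_ediv_eq (by nlinarith : 4 * p ^ 2 - 1 ≠ 0) hp.ne',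
    Int.add_two_mul_add_emod_two]
  rw [sum_add_distrib, ← mul_sum, sum_ediv_emod_two_eq hp (by nlinarith [mul_nonneg hN hr0])
    (by nlinarith [mul_le_mul_of_nonneg_left (by omega : q * u % p ≤ p - 1) hN]), hexc,
    sum_const, Int.card_Ico, nsmul_eq_mul, sub_zero, Int.toNat_of_nonneg (by positivity)]
  ring

theorem oddFloorCount_mul_add {p q : ℤ} (hp : 0 < p) (hq : Odd q) (hcop : IsCoprime p q) :
    oddFloorCount (p * (4 * p ^ 2 - 1)) ((4 * p ^ 2 - 1) * q + 2 * p) =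
      2 * p ^ 3 - p + 1 + oddFloorCount p q := by
  set N := 4 * p ^ 2 - 1
  have hN0 : 0 < N := by nlinarith
  set P := p * N
  set Q := N * q + 2 * p
  have hP : 0 < P := by positivity
  have hQ : Odd Q := (Odd.mul ⟨2 * p ^ 2 - 1, by ring⟩ hq).add_even (even_two_mul p)
  have hhead : ∀ v ∈ Ico 0 p, Q * v / P % 2 = q * v / p % 2 := by
    intro v hv
    obtain ⟨hv0, hvp⟩ := mem_Ico.mp hv
    have hr0 := Int.emod_nonneg (q * v) hp.ne'
    have hrp := Int.emod_lt_of_pos (q * v) hp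
    have h := mul_add_ediv_eq hN0.ne' hp.ne' q v 0
    simp only [mul_zero, add_zero] at h
    have hW : (N * (q * v % p) + 2 * p * v) / P = 0 :=
      Int.ediv_eq_zero_of_lt (by nlinarith [mul_nonneg hN0.le hr0])
        (by nlinarith [mul_le_mul_of_nonneg_left (by omega : q * v % p ≤ p - 1) hN0.le])
    rw [h, hW, add_zero]
  have hsplit : ∑ k ∈ Ico 0 (2 * p * (2 * p ^ 2)), Q * k / P % 2 =
      oddFloorCount P Q + (p - oddFloorCount p q) := by
    rw [show 2 * p * (2 * p ^ 2) = P + p by ring, ← Ico_union_Ico_eq_Ico hP.le (by omega),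
      sum_union (Ico_disjoint_Ico_consecutive _ _ _), oddFloorCount, oddFloorCount,
      show Ico P (P + p) = Ico (0 + P) (p + P) by rw [zero_add, add_comm], ← sum_Ico_add]
    congr 1
    rw [sum_congr rfl fun v hv => by
        rw [Int.mul_add_ediv_emod_two_of_odd hQ hP.ne', hhead v hv],
      sum_sub_distrib, sum_const, Int.card_Ico, nsmul_eq_mul, sub_zero,
      Int.toNat_of_nonneg hp.le, mul_one]
  have hrect : ∑ k ∈ Ico 0 (2 * p * (2 * p ^ 2)), Q * k / P % 2 = 2 * p ^ 3 + 1 := by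
    rw [sum_Ico_mul_eq_sum_sum (by omega), sum_congr rfl fun u hu =>
      sum_Ico_two_mul_sq_emod_two hp hcop (mem_Ico.mp hu).1 (mem_Ico.mp hu).2]
    simp only [sum_sub_distrib, sum_const, mul_ite, mul_one, mul_zero, sum_ite_eq',
      mem_Ico, Int.card_Ico, nsmul_eq_mul]
    rw [if_pos (by omega), Int.mul_ediv_cancel _ hp.ne', Int.odd_iff.mp hq,
      sub_zero, Int.toNat_of_nonneg (by omega)]
    ring
  linarith

lemma diagElem_mul_add {p q : ℤ} (hp : 0 < p) (hq : Odd q) (hcop : IsCoprime p q) :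
    diagElem (p * (4 * p ^ 2 - 1)) ((4 * p ^ 2 - 1) * q + 2 * p) = diagElem p q + 2 := by
  rw [diagElem_eq_two_mul_oddFloorCount (by nlinarith), oddFloorCount_mul_add hp hq hcop,
    diagElem_eq_two_mul_oddFloorCount hp]
  ring

lemma isCoprime_mul_add {p q : ℤ} (hcop : IsCoprime p q) :
    IsCoprime (p * (4 * p ^ 2 - 1)) ((4 * p ^ 2 - 1) * q + 2 * p) := by
  refine IsCoprime.mul_left ?_ ?_
  · have hpN : IsCoprime p (4 * p ^ 2 - 1) := ⟨4 * p, -1, by ring⟩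
    exact (hpN.mul_right hcop).add_mul_right_right 2
  · have hN2p : IsCoprime (4 * p ^ 2 - 1) (2 * p) := ⟨-1, 2 * p, by ring⟩
    exact hN2p.mul_add_left_right q

theorem diagElem_change_general (p q : ℤ) (hcop : IsCoprime p q) (hqodd : Odd q) (hp : 3 ≤ p) :
    diagElem (4 * p ^ 3 - p) ((4 * p ^ 2 - 1) * q + 2 * p) = diagElem p q + 2 ∧
    diagElem (4 * p ^ 3 - p) ((4 * p ^ 2 - 1) * q - 2 * p) = diagElem p q - 2 := by
  have hp0 : 0 < p := by omega
  have hP : 4 * p ^ 3 - p = p * (4 * p ^ 2 - 1) := by ring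
  refine ⟨by rw [hP, diagElem_mul_add hp0 hqodd hcop], ?_⟩
  have hq' : Odd (2 * p - q) := (even_two_mul p).sub_odd hqodd
  have hcop' : IsCoprime p (2 * p - q) := by
    rw [sub_eq_add_neg, mul_comm]
    exact hcop.neg_right.mul_add_left_right 2
  have hreflect := diagElem_two_mul_sub hp0 hcop'
  rw [sub_sub_cancel] at hreflect
  rw [hP, show (4 * p ^ 2 - 1) * q - 2 * p =
      2 * (p * (4 * p ^ 2 - 1)) - ((4 * p ^ 2 - 1) * (2 * p - q) + 2 * p) by ring,
    diagElem_two_mul_sub (by nlinarith) (isCoprime_mul_add hcop'),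
    diagElem_mul_add hp0 hq' hcop', hreflect]
  ring

/-- Let `p` and `q` be relatively prime odd integers with `p ≥ 3` and `0 < q < p`. Then
`d(4p³ − p, (4p² − 1)q + 2p) = d(p, q) + 2` and `d(4p³ − p, (4p² − 1)q − 2p) = d(p, q) − 2`. -/
theorem diagElem_change (p q : ℤ) (hcop : IsCoprime p q) (hpodd : Odd p) (hqodd : Odd q)
    (hp : 3 ≤ p) (hq0 : 0 < q) (hqp : q < p) :
    diagElem (4 * p ^ 3 - p) ((4 * p ^ 2 - 1) * q + 2 * p) = diagElem p q + 2 ∧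
    diagElem (4 * p ^ 3 - p) ((4 * p ^ 2 - 1) * q - 2 * p) = diagElem p q - 2 :=
  diagElem_change_general p q hcop hqodd hp
end

section
/- For every integer n ≥ 1 and every ε ∈ {1, −1}, d((2n+1)(4n+1)(4n+3), (4n+1)(4n+3) − 2ε(2n+1)) = −2n − 2ε. (This is the mirror form of the statement d(K_n(ε)) = d(K_n) + 2ε = 2n + 2ε for the 2-bridge knots K_n(ε).) -/
/-!
Both members of the family are `d(p, q)` with `c = 2m + 1`, `p = c (c u + 1)`, `q = 2 c u + 1`:
take `(m, u) = (2n + 1, 2n)` for `ε = 1` and `(m, u) = (2n, 2n + 2)` for `ε = -1`.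
Since `q / p = 2 / c - 1 / p`, writing `k ∈ [0, p)` as `k = c a + b` with `0 ≤ a ≤ c u`,
`0 ≤ b < c` gives `q k = 2 a p + (b q - c a)` with `-p ≤ b q - c a < 2 p`. So the sign
`(-1)^⌊q k / p⌋` is `+1` exactly when `0 ≤ b q - c a < p`, i.e. when `u (2 b - c) ≤ a ≤ 2 b u`.
Row `b` thus contributes `c u + 1 - 2 u |2 b - c|`, and summing over the rows gives
`d(p, q) = u - 2 m`.
-/

open Finset

theorem Rat.floor_intCast_div_intCast {p : ℤ} (hp : 0 < p) (x : ℤ) : ⌊(x : ℚ) / p⌋ = x / p := by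
  lift p to ℕ using hp.le
  simpa using Rat.floor_intCast_div_natCast x p

theorem diagElem_eq_one_sub_sum_Ico {p : ℤ} (hp : 0 < p) (q : ℤ) :
    diagElem p q = 1 - ∑ k ∈ Ico 0 p, ((q * k / p).negOnePow : ℤ) := by
  have hIco : Ico 0 p = insert 0 (Icc 1 (p - 1)) := by
    ext k; simp only [mem_Ico, mem_insert, mem_Icc]; omega
  rw [hIco, sum_insert (by simp), diagElem]
  simp_rw [← Rat.floor_intCast_div_intCast hp, Int.cast_mul]
  simp

theorem Int.sum_Ico_zero_mul {M : Type*} [AddCommMonoid M] {c : ℤ} (hc : 0 < c) (m : ℤ)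
    (f : ℤ → M) : ∑ k ∈ Ico 0 (c * m), f k = ∑ b ∈ Ico 0 c, ∑ a ∈ Ico 0 m, f (c * a + b) := by
  rw [← sum_product']
  refine sum_nbij' (fun k => (k % c, k / c)) (fun x => c * x.2 + x.1) ?_ ?_ ?_ ?_ ?_
  · intro k hk
    simp only [mem_Ico, mem_product] at hk ⊢
    refine ⟨⟨Int.emod_nonneg _ hc.ne', Int.emod_lt_of_pos _ hc⟩,
      Int.ediv_nonneg hk.1 hc.le, (Int.ediv_lt_iff_lt_mul hc).2 (by linarith [mul_comm c m])⟩
  · rintro ⟨b, a⟩ h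
    simp only [mem_Ico, mem_product] at h ⊢
    constructor <;> nlinarith
  · intro k _
    exact Int.mul_ediv_add_emod k c
  · rintro ⟨b, a⟩ h
    simp only [mem_Ico, mem_product] at h
    have hb : b / c = 0 := Int.ediv_eq_zero_of_lt h.1.1 h.1.2
    simp only [Prod.mk.injEq, add_comm (c * a) b, Int.add_mul_emod_self_left,
      Int.add_mul_ediv_left _ _ hc.ne', hb, zero_add]
    exact ⟨Int.emod_eq_of_lt h.1.1 h.1.2, trivial⟩
  · intro k _
    rw [Int.mul_ediv_add_emod]

theorem Int.negOnePow_ediv_eq_ite {p x : ℤ} (hp : 0 < p) (hlo : -p ≤ x) (hhi : x < 2 * p) :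
    ((x / p).negOnePow : ℤ) = if 0 ≤ x ∧ x < p then 1 else -1 := by
  have h1 : -1 ≤ x / p := (Int.le_ediv_iff_mul_le hp).2 (by linarith)
  have h2 : x / p < 2 := (Int.ediv_lt_iff_lt_mul hp).2 (by linarith)
  have hzero : x / p = 0 ↔ 0 ≤ x ∧ x < p := by
    constructor
    · intro h
      exact ⟨by simpa [h] using (Int.le_ediv_iff_mul_le hp).1 h.ge,
        by simpa [h] using (Int.ediv_lt_iff_lt_mul hp).1 (h.trans_lt one_pos)⟩
    · exact fun h => Int.ediv_eq_zero_of_lt h.1 h.2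
  simp only [← hzero]
  interval_cases h : x / p <;> simp

theorem sum_ite_one_neg_one {α : Type*} (s : Finset α) (P : α → Prop) [DecidablePred P] :
    ∑ a ∈ s, (if P a then (1 : ℤ) else -1) = 2 * #(s.filter P) - #s := by
  have h : ∀ a ∈ s, (if P a then (1 : ℤ) else -1) = 2 * (if P a then 1 else 0) - 1 := by
    intro a _; split_ifs <;> norm_num
  rw [sum_congr rfl h, sum_sub_distrib, ← mul_sum, sum_boole, sum_const]
  simp

theorem card_filter_Ico_sub_le_le {x y : ℤ} (h0 : 0 ≤ x) (h1 : x ≤ 2 * y) :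
    (#((Ico 0 (y + 1)).filter fun a => x - y ≤ a ∧ a ≤ x) : ℤ) = y + 1 - |x - y| := by
  have h : (Ico 0 (y + 1)).filter (fun a => x - y ≤ a ∧ a ≤ x)
      = Icc (max 0 (x - y)) (min y x) := by
    ext a; simp only [mem_filter, mem_Ico, mem_Icc]; omega
  rw [h, Int.card_Icc]
  rcases abs_cases (x - y) with ⟨_, _⟩ | ⟨_, _⟩ <;> omega

theorem sum_Ico_abs_two_mul_sub (m : ℤ) (hm : 0 ≤ m) :
    ∑ b ∈ Ico 0 (2 * m + 1), |2 * b - (2 * m + 1)| = 2 * m ^ 2 + 2 * m + 1 := by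
  induction m, hm using Int.leInduction with
  | base => decide
  | succ m hm ih =>
    have hshift : ∑ b ∈ Ico 1 (2 * m + 3), |2 * b - (2 * m + 3)|
        = ∑ b ∈ Ico 0 (2 * m + 2), |2 * b - (2 * m + 1)| := by
      have h := sum_Ico_add' (fun b => |2 * b - (2 * m + 3)|) 0 (2 * m + 2) 1
      rw [zero_add, show 2 * m + 2 + 1 = 2 * m + 3 by ring] at h
      rw [← h]
      exact sum_congr rfl fun b _ => by ring_nf
    calc ∑ b ∈ Ico 0 (2 * (m + 1) + 1), |2 * b - (2 * (m + 1) + 1)|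
        = ∑ b ∈ Ico 0 (2 * m + 3), |2 * b - (2 * m + 3)| := by ring_nf
      _ = |2 * 0 - (2 * m + 3)| + ∑ b ∈ Ico 0 (2 * m + 2), |2 * b - (2 * m + 1)| := by
          rw [← insert_Ico_add_one_left_eq_Ico (by omega), sum_insert (by simp), zero_add, hshift]
      _ = |2 * 0 - (2 * m + 3)| + (|2 * (2 * m + 1) - (2 * m + 1)|
            + ∑ b ∈ Ico 0 (2 * m + 1), |2 * b - (2 * m + 1)|) := by
          rw [show 2 * m + 2 = 2 * m + 1 + 1 by ring,
            ← insert_Ico_right_eq_Ico_add_one (show (0 : ℤ) ≤ 2 * m + 1 by omega),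
            sum_insert (by simp)]
      _ = 2 * (m + 1) ^ 2 + 2 * (m + 1) + 1 := by
          rw [ih, abs_of_neg (by omega), abs_of_nonneg (by omega)]
          ring

theorem add_mul_mem_Ico_iff {b c : ℤ} (hb : 0 ≤ b) (hbc : b < c) (y n : ℤ) :
    0 ≤ b + c * y ∧ b + c * y < c * n ↔ 0 ≤ y ∧ y < n := by
  constructor <;> rintro ⟨h0, h1⟩
  · constructor <;> by_contra! hy <;> nlinarith
  · constructor <;> nlinarith

theorem sum_negOnePow_row {c u b : ℤ} (hc : 0 < c) (hu : 0 ≤ u) (hb : 0 ≤ b) (hbc : b < c) :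
    ∑ a ∈ Ico 0 (c * u + 1), (((2 * c * u + 1) * (c * a + b) / (c * (c * u + 1))).negOnePow : ℤ)
      = c * u + 1 - 2 * u * |2 * b - c| := by
  have hp : 0 < c * (c * u + 1) := by positivity
  have hterm : ∀ a ∈ Ico 0 (c * u + 1),
      (((2 * c * u + 1) * (c * a + b) / (c * (c * u + 1))).negOnePow : ℤ)
        = if 2 * b * u - c * u ≤ a ∧ a ≤ 2 * b * u then 1 else -1 := by
    intro a ha
    rw [mem_Ico] at ha
    have hsplit : (2 * c * u + 1) * (c * a + b)
        = (b + c * (2 * b * u - a)) + c * (c * u + 1) * (2 * a) := by ring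
    rw [hsplit, Int.add_mul_ediv_left _ _ hp.ne', Int.negOnePow_add, Int.negOnePow_two_mul,
      mul_one, Int.negOnePow_ediv_eq_ite hp (by nlinarith) (by nlinarith)]
    refine if_congr ?_ rfl rfl
    rw [add_mul_mem_Ico_iff hb hbc]
    omega
  rw [sum_congr rfl hterm, sum_ite_one_neg_one,
    card_filter_Ico_sub_le_le (by positivity) (by nlinarith), Int.card_Ico,
    show 2 * b * u - c * u = u * (2 * b - c) by ring, abs_mul, abs_of_nonneg hu,
    sub_zero, Int.toNat_of_nonneg (by positivity)]
  ring

theorem diagElem_oddFamily (m u : ℤ) (hm : 0 ≤ m) (hu : 0 ≤ u) :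
    diagElem ((2 * m + 1) * ((2 * m + 1) * u + 1)) (2 * (2 * m + 1) * u + 1) = u - 2 * m := by
  have hc : 0 < 2 * m + 1 := by omega
  rw [diagElem_eq_one_sub_sum_Ico (by positivity), Int.sum_Ico_zero_mul hc,
    sum_congr rfl fun b hb => sum_negOnePow_row hc hu (mem_Ico.1 hb).1 (mem_Ico.1 hb).2,
    sum_sub_distrib, sum_const, Int.card_Ico, sub_zero, nsmul_eq_mul, Int.toNat_of_nonneg hc.le,
    ← mul_sum, sum_Ico_abs_two_mul_sub m hm]
  ring

/-- For every integer `n ≥ 1` and every `ε ∈ {1, −1}`,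
`d((2n+1)(4n+1)(4n+3), (4n+1)(4n+3) − 2ε(2n+1)) = −2n − 2ε`. -/
theorem diagElem_torusFamily (n : ℤ) (hn : 1 ≤ n) (ε : ℤ) (hε : ε = 1 ∨ ε = -1) :
    diagElem ((2 * n + 1) * (4 * n + 1) * (4 * n + 3))
      ((4 * n + 1) * (4 * n + 3) - 2 * ε * (2 * n + 1)) = -2 * n - 2 * ε := by
  rcases hε with rfl | rfl
  · have h := diagElem_oddFamily (2 * n + 1) (2 * n) (by omega) (by omega)
    ring_nf at h ⊢
    exact h
  · have h := diagElem_oddFamily (2 * n) (2 * n + 2) (by omega) (by omega)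
    ring_nf at h ⊢
    exact h
end

section
/- Fix an integer n ≥ 1 and ε ∈ {1, −1}. Let M, B, C be the 2×2 integer matrices with rows M = ((1, −2), (2, −3)), B = ((1, 0), (2ε, 1)), and C = ((1, −2ε), (0, 1)) (all of determinant 1). Then the matrix product Mⁿ · B · M⁻ⁿ · C · Mⁿ has (2,2)-entry equal to (−1)^{n+1}(2n+1)(4n+1)(4n+3) and (1,2)-entry equal to (−1)^{n+1}(2n(4n+1)(4n+3) + 2ε(2n+1)). -/
/-!
`M = -1 + 2J` with `J = !![1, -1; 1, -1]` and `J * J = 0`, so `M⁻¹ = -1 - 2J` and the binomial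
theorem collapses to `M^(±n) = (-1)ⁿ (1 ∓ 2nJ)`. The product is therefore `(-1)ⁿ` times a matrix
with polynomial entries of degree 3 in `n` and 2 in `ε`, and these factor as claimed once `ε² = 1`.
-/

open Matrix

section SquareZero

variable {R : Type*} [Ring R] {x : R}

theorem one_add_pow_of_mul_self_eq_zero (hx : x * x = 0) (n : ℕ) : (1 + x) ^ n = 1 + n • x := by
  induction n with
  | zero => simp
  | succ n ih =>
    rw [pow_succ, ih, add_mul, one_mul, smul_mul_assoc, mul_add, mul_one, hx, add_zero, succ_nsmul]
    abel

theorem neg_one_add_pow_of_mul_self_eq_zero (hx : x * x = 0) (n : ℕ) :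
    (-1 + x) ^ n = (-1 : ℤ) ^ n • (1 - n • x) := by
  have hx' : -x * -x = 0 := by rw [neg_mul_neg, hx]
  rw [← neg_neg x, ← neg_add, neg_pow, one_add_pow_of_mul_self_eq_zero hx', neg_neg, smul_neg,
    ← sub_eq_add_neg, zsmul_eq_mul, Int.cast_pow, Int.cast_neg, Int.cast_one]

end SquareZero

theorem neg_one_add_smul_pow (c : ℤ) (n : ℕ) :
    (-1 + c • !![1, -1; 1, -1] : Matrix (Fin 2) (Fin 2) ℤ) ^ n =
      (-1 : ℤ) ^ n • !![1 - c * n, c * n; -(c * n), 1 + c * n] := by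
  have hJ : (c • !![1, -1; 1, -1] : Matrix (Fin 2) (Fin 2) ℤ) * c • !![1, -1; 1, -1] = 0 := by
    ext i j; fin_cases i <;> fin_cases j <;> simp
  rw [neg_one_add_pow_of_mul_self_eq_zero hJ]
  congr 1
  ext i j
  fin_cases i <;> fin_cases j <;> simp [mul_comm]

theorem M_eq_neg_one_add_smul :
    (!![1, -2; 2, -3] : Matrix (Fin 2) (Fin 2) ℤ) = -1 + (2 : ℤ) • !![1, -1; 1, -1] := by
  ext i j; fin_cases i <;> fin_cases j <;> simp

theorem M_inv_eq_neg_one_add_smul :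
    (!![1, -2; 2, -3] : Matrix (Fin 2) (Fin 2) ℤ)⁻¹ = -1 + (-2 : ℤ) • !![1, -1; 1, -1] :=
  inv_eq_right_inv (by simp [one_fin_two])

theorem matrix_product_entries_general (n : ℕ) (ε : ℤ) (hε : ε = 1 ∨ ε = -1) :
    (((!![1, -2; 2, -3] : Matrix (Fin 2) (Fin 2) ℤ) ^ n * !![1, 0; 2 * ε, 1] *
        ((!![1, -2; 2, -3] : Matrix (Fin 2) (Fin 2) ℤ)⁻¹) ^ n * !![1, -2 * ε; 0, 1] *
        (!![1, -2; 2, -3] : Matrix (Fin 2) (Fin 2) ℤ) ^ n) 1 1 =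
      (-1 : ℤ) ^ (n + 1) * ((2 * (n : ℤ) + 1) * (4 * (n : ℤ) + 1) * (4 * (n : ℤ) + 3))) ∧
    (((!![1, -2; 2, -3] : Matrix (Fin 2) (Fin 2) ℤ) ^ n * !![1, 0; 2 * ε, 1] *
        ((!![1, -2; 2, -3] : Matrix (Fin 2) (Fin 2) ℤ)⁻¹) ^ n * !![1, -2 * ε; 0, 1] *
        (!![1, -2; 2, -3] : Matrix (Fin 2) (Fin 2) ℤ) ^ n) 0 1 =
      (-1 : ℤ) ^ (n + 1) *
        (2 * (n : ℤ) * (4 * (n : ℤ) + 1) * (4 * (n : ℤ) + 3) + 2 * ε * (2 * (n : ℤ) + 1))) := by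
  have hε2 : ε ^ 2 = 1 := by rcases hε with rfl | rfl <;> norm_num
  have hs : (-1 : ℤ) ^ n * (-1) ^ n = 1 := by rw [← mul_pow]; simp
  rw [M_inv_eq_neg_one_add_smul, M_eq_neg_one_add_smul, neg_one_add_smul_pow, neg_one_add_smul_pow]
  simp only [Matrix.smul_mul, Matrix.mul_smul, smul_smul, hs, one_smul]
  simp only [mul_fin_two, Matrix.smul_apply, of_apply, cons_val', cons_val_one, cons_val_zero,
    empty_val', cons_val_fin_one, smul_eq_mul, pow_succ]
  -- the `ε²` part of the product is `-4ε²(2n + 1) X E₂₂ X` with `X = 1 - 2nJ`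
  constructor
  · linear_combination (-1 : ℤ) ^ n * (-4 * (2 * n + 1) ^ 3) * hε2
  · linear_combination (-1 : ℤ) ^ n * (-8 * n * (2 * n + 1) ^ 2) * hε2

/-- Fix an integer `n ≥ 1` and `ε ∈ {1, −1}`. Let `M`, `B`, `C` be the 2×2 integer matrices
`M = ((1, −2), (2, −3))`, `B = ((1, 0), (2ε, 1))`, `C = ((1, −2ε), (0, 1))`. Then the product
`Mⁿ · B · M⁻ⁿ · C · Mⁿ` has `(2,2)`-entry `(−1)^{n+1}(2n+1)(4n+1)(4n+3)` and `(1,2)`-entry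
`(−1)^{n+1}(2n(4n+1)(4n+3) + 2ε(2n+1))`. -/
theorem matrix_product_entries (n : ℕ) (hn : 1 ≤ n) (ε : ℤ) (hε : ε = 1 ∨ ε = -1) :
    (((!![1, -2; 2, -3] : Matrix (Fin 2) (Fin 2) ℤ) ^ n * !![1, 0; 2 * ε, 1] *
        ((!![1, -2; 2, -3] : Matrix (Fin 2) (Fin 2) ℤ)⁻¹) ^ n * !![1, -2 * ε; 0, 1] *
        (!![1, -2; 2, -3] : Matrix (Fin 2) (Fin 2) ℤ) ^ n) 1 1 =
      (-1 : ℤ) ^ (n + 1) * ((2 * (n : ℤ) + 1) * (4 * (n : ℤ) + 1) * (4 * (n : ℤ) + 3))) ∧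
    (((!![1, -2; 2, -3] : Matrix (Fin 2) (Fin 2) ℤ) ^ n * !![1, 0; 2 * ε, 1] *
        ((!![1, -2; 2, -3] : Matrix (Fin 2) (Fin 2) ℤ)⁻¹) ^ n * !![1, -2 * ε; 0, 1] *
        (!![1, -2; 2, -3] : Matrix (Fin 2) (Fin 2) ℤ) ^ n) 0 1 =
      (-1 : ℤ) ^ (n + 1) *
        (2 * (n : ℤ) * (4 * (n : ℤ) + 1) * (4 * (n : ℤ) + 3) + 2 * ε * (2 * (n : ℤ) + 1))) :=
  matrix_product_entries_general n ε hε
end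

section
/- For every sequence ε : ℕ → {0,1} and every n ≥ 0, q_ε(n) · q'_ε(n) ≡ 1 (mod p(n)). -/
/-- `p(0) = 3`, `p(n+1) = p(n)·(4·p(n)² − 1)`. -/
def pSeq : ℕ → ℤ
  | 0 => 3
  | n + 1 => pSeq n * (4 * (pSeq n) ^ 2 - 1)

/-- `q_ε(0) = 2`, `q_ε(n+1) = q_ε(n)·(4·p(n)² − 1) + 2·(−1)^{ε(n)+1}·p(n)`. -/
def qSeq (ε : ℕ → ℕ) : ℕ → ℤ
  | 0 => 2
  | n + 1 => qSeq ε n * (4 * (pSeq n) ^ 2 - 1) + 2 * (-1 : ℤ) ^ (ε n + 1) * pSeq n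

/-- `q'_ε(0) = −1`, `q'_ε(n+1) = q'_ε(n)·(4·p(n)² − 1) + 2·(−1)^{ε(n)+1}·p(n)`. -/
def q'Seq (ε : ℕ → ℕ) : ℕ → ℤ
  | 0 => -1
  | n + 1 => q'Seq ε n * (4 * (pSeq n) ^ 2 - 1) + 2 * (-1 : ℤ) ^ (ε n + 1) * pSeq n

/- Since `q'_ε = q_ε - p`, the claim is `q_ε(n)² ≡ 1 (mod p(n))`. This propagates along the
recursion because `p(n+1) = p(n)·(4p(n)² − 1)` divides
`(q·(4p² − 1) + 2sp)² − 1 = (q² − 1)(4p² − 1)² + 4p(4p² − 1)(p + sq)` whenever `s² = 1`. -/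

lemma q'Seq_eq_qSeq_sub_pSeq (ε : ℕ → ℕ) (n : ℕ) : q'Seq ε n = qSeq ε n - pSeq n := by
  induction n with
  | zero => rfl
  | succ n ih => rw [q'Seq, qSeq, pSeq, ih]; ring

lemma mul_four_mul_sq_sub_one_dvd_sq_sub_one {p q s : ℤ} (hs : s ^ 2 = 1) (h : p ∣ q ^ 2 - 1) :
    p * (4 * p ^ 2 - 1) ∣ (q * (4 * p ^ 2 - 1) + 2 * s * p) ^ 2 - 1 := by
  obtain ⟨k, hk⟩ := h
  exact ⟨k * (4 * p ^ 2 - 1) + 4 * p + 4 * s * q, by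
    linear_combination (4 * p ^ 2 - 1) ^ 2 * hk + 4 * p ^ 2 * hs⟩

lemma pSeq_dvd_qSeq_sq_sub_one (ε : ℕ → ℕ) (n : ℕ) : pSeq n ∣ qSeq ε n ^ 2 - 1 := by
  induction n with
  | zero => exact ⟨1, rfl⟩
  | succ n ih =>
    have hs : ((-1 : ℤ) ^ (ε n + 1)) ^ 2 = 1 := by rw [← pow_mul, pow_mul', neg_one_sq, one_pow]
    exact mul_four_mul_sq_sub_one_dvd_sq_sub_one hs ih

theorem qSeq_mul_q'Seq_modEq_one_general (ε : ℕ → ℕ) (n : ℕ) :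
    qSeq ε n * q'Seq ε n ≡ 1 [ZMOD pSeq n] := by
  rw [Int.modEq_iff_dvd, q'Seq_eq_qSeq_sub_pSeq]
  have h := (dvd_mul_left (pSeq n) (qSeq ε n)).sub (pSeq_dvd_qSeq_sq_sub_one ε n)
  rwa [show qSeq ε n * pSeq n - (qSeq ε n ^ 2 - 1) = 1 - qSeq ε n * (qSeq ε n - pSeq n) by ring] at h

/-- For every sequence `ε : ℕ → {0,1}` and every `n ≥ 0`,
`q_ε(n) · q'_ε(n) ≡ 1 (mod p(n))`. -/
theorem qSeq_mul_q'Seq_modEq_one (ε : ℕ → ℕ) (hε : ∀ j, ε j = 0 ∨ ε j = 1) (n : ℕ) :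
    qSeq ε n * q'Seq ε n ≡ 1 [ZMOD pSeq n] :=
  qSeq_mul_q'Seq_modEq_one_general ε n
end

section
/- For every sequence ε : ℕ → {0,1} and every n ≥ 0: (i) p(n+1) = 3 · ∏_{k=0}^{n} (4·p(k)² − 1); (ii) for each 0 ≤ j ≤ n the integer 4·p(j)² − 1 divides p(n+1); and (iii) 3 · q_ε(n+1) = 2 · p(n+1) + ∑_{j=0}^{n} 6 · (−1)^{ε(j)+1} · (p(n+1) / (4·p(j)² − 1)), where the divisions are exact integer divisions. -/
/-!
With `d(k) = 4·p(k)² − 1`, the recursion gives `p(n+1) = p(0)·∏_{k ≤ n} d(k)` and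
`q(n+1)/p(n+1) = q(n)/p(n) + 2·(−1)^{ε(n)+1}/d(n)`. Telescoping from `q(0)/p(0) = 2/3` and
clearing denominators yields (iii); every `p(n+1)/d(j)` is exact because `d(j)` is a factor
of the product.
-/

lemma four_mul_sq_sub_one_ne_zero (a : ℤ) : 4 * a ^ 2 - 1 ≠ 0 := by
  have : a ^ 2 = a * a := sq a
  omega

lemma pSeq_succ (n : ℕ) : pSeq (n + 1) = pSeq n * (4 * pSeq n ^ 2 - 1) := rfl

lemma qSeq_succ (ε : ℕ → ℕ) (n : ℕ) :
    qSeq ε (n + 1) = qSeq ε n * (4 * pSeq n ^ 2 - 1) + 2 * (-1 : ℤ) ^ (ε n + 1) * pSeq n :=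
  rfl

lemma pSeq_succ_eq_three_mul_prod (n : ℕ) :
    pSeq (n + 1) = 3 * ∏ k ∈ Finset.range (n + 1), (4 * pSeq k ^ 2 - 1) := by
  induction n with
  | zero => rfl
  | succ n ih => rw [Finset.prod_range_succ, pSeq_succ (n + 1), ih, mul_assoc]

lemma four_mul_pSeq_sq_sub_one_dvd_pSeq_succ {j n : ℕ} (h : j ≤ n) :
    4 * pSeq j ^ 2 - 1 ∣ pSeq (n + 1) := by
  rw [pSeq_succ_eq_three_mul_prod]
  exact (Finset.dvd_prod_of_mem _ (Finset.mem_range.2 (Nat.lt_succ_of_le h))).mul_left 3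

lemma pSeq_succ_ediv_self (n : ℕ) : pSeq (n + 1) / (4 * pSeq n ^ 2 - 1) = pSeq n :=
  Int.mul_ediv_cancel _ (four_mul_sq_sub_one_ne_zero _)

lemma pSeq_succ_succ_ediv {j n : ℕ} (h : j ≤ n) :
    pSeq (n + 2) / (4 * pSeq j ^ 2 - 1) =
      pSeq (n + 1) / (4 * pSeq j ^ 2 - 1) * (4 * pSeq (n + 1) ^ 2 - 1) := by
  rw [pSeq_succ (n + 1), mul_comm,
    Int.mul_ediv_assoc _ (four_mul_pSeq_sq_sub_one_dvd_pSeq_succ h), mul_comm]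

lemma three_mul_qSeq_succ (ε : ℕ → ℕ) (n : ℕ) :
    3 * qSeq ε (n + 1) = 2 * pSeq (n + 1) +
      ∑ j ∈ Finset.range (n + 1),
        6 * (-1 : ℤ) ^ (ε j + 1) * (pSeq (n + 1) / (4 * pSeq j ^ 2 - 1)) := by
  induction n with
  | zero =>
    rw [Finset.sum_range_one, pSeq_succ_ediv_self, qSeq_succ, pSeq_succ]
    simp only [qSeq, pSeq]
    ring
  | succ n ih =>
    have hsum : ∀ j ∈ Finset.range (n + 1),
        6 * (-1 : ℤ) ^ (ε j + 1) * (pSeq (n + 2) / (4 * pSeq j ^ 2 - 1)) =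
          6 * (-1 : ℤ) ^ (ε j + 1) * (pSeq (n + 1) / (4 * pSeq j ^ 2 - 1)) *
            (4 * pSeq (n + 1) ^ 2 - 1) := fun j hj => by
      rw [pSeq_succ_succ_ediv (Nat.lt_succ_iff.mp (Finset.mem_range.1 hj))]
      ring
    rw [Finset.sum_range_succ, Finset.sum_congr rfl hsum, ← Finset.sum_mul,
      pSeq_succ_ediv_self, qSeq_succ, pSeq_succ (n + 1)]
    linear_combination (4 * pSeq (n + 1) ^ 2 - 1) * ih

theorem pSeq_qSeq_closed_form_general (ε : ℕ → ℕ) (n : ℕ) :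
    pSeq (n + 1) = 3 * ∏ k ∈ Finset.range (n + 1), (4 * (pSeq k) ^ 2 - 1) ∧
    (∀ j ≤ n, (4 * (pSeq j) ^ 2 - 1) ∣ pSeq (n + 1)) ∧
    3 * qSeq ε (n + 1) = 2 * pSeq (n + 1) +
      ∑ j ∈ Finset.range (n + 1),
        6 * (-1 : ℤ) ^ (ε j + 1) * (pSeq (n + 1) / (4 * (pSeq j) ^ 2 - 1)) :=
  ⟨pSeq_succ_eq_three_mul_prod n, fun _ hj => four_mul_pSeq_sq_sub_one_dvd_pSeq_succ hj,
    three_mul_qSeq_succ ε n⟩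

/-- For every sequence `ε : ℕ → {0,1}` and every `n ≥ 0`:
(i) `p(n+1) = 3 · ∏_{k=0}^{n} (4·p(k)² − 1)`;
(ii) for each `0 ≤ j ≤ n` the integer `4·p(j)² − 1` divides `p(n+1)`; and
(iii) `3 · q_ε(n+1) = 2 · p(n+1) + ∑_{j=0}^{n} 6 · (−1)^{ε(j)+1} · (p(n+1) / (4·p(j)² − 1))`,
where the divisions are exact integer divisions. -/
theorem pSeq_qSeq_closed_form (ε : ℕ → ℕ) (hε : ∀ j, ε j = 0 ∨ ε j = 1) (n : ℕ) :
    pSeq (n + 1) = 3 * ∏ k ∈ Finset.range (n + 1), (4 * (pSeq k) ^ 2 - 1) ∧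
    (∀ j ≤ n, (4 * (pSeq j) ^ 2 - 1) ∣ pSeq (n + 1)) ∧
    3 * qSeq ε (n + 1) = 2 * pSeq (n + 1) +
      ∑ j ∈ Finset.range (n + 1),
        6 * (-1 : ℤ) ^ (ε j + 1) * (pSeq (n + 1) / (4 * (pSeq j) ^ 2 - 1)) :=
  pSeq_qSeq_closed_form_general ε n
end

section
/- For every sequence ε : ℕ → {0,1} and every n ≥ 0, the integers p(n) and q_ε(n) are relatively prime, and the integers p(n) and q'_ε(n) are relatively prime. -/
/-!
With `m = 4p² − 1` we have `4p · p − m = 1` and `(2p)² − m = 1`, so `m` is coprime to `p` and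
to `2p`. Hence if `p` is coprime to `q`, then both `p` and `m` are coprime to `q m ± 2p`, and so
is their product `p m`: coprimality passes from step `n` to step `n + 1`, starting from
`gcd(3, 2) = gcd(3, −1) = 1`.
-/

section CommRing

variable {R : Type*} [CommRing R]

theorem isCoprime_self_four_mul_sq_sub_one (p : R) : IsCoprime p (4 * p ^ 2 - 1) :=
  ⟨4 * p, -1, by ring⟩

theorem isCoprime_four_mul_sq_sub_one_two_mul (p : R) : IsCoprime (4 * p ^ 2 - 1) (2 * p) :=
  ⟨-1, 2 * p, by ring⟩

theorem IsCoprime.mul_four_mul_sq_sub_one {p q u : R} (h : IsCoprime p q) (hu : IsUnit u) :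
    IsCoprime (p * (4 * p ^ 2 - 1)) (q * (4 * p ^ 2 - 1) + 2 * u * p) := by
  have hp : IsCoprime p (q * (4 * p ^ 2 - 1) + 2 * u * p) :=
    (h.mul_right (isCoprime_self_four_mul_sq_sub_one p)).add_mul_right_right _
  have hm : IsCoprime (4 * p ^ 2 - 1) (q * (4 * p ^ 2 - 1) + 2 * u * p) := by
    have h2up :=
      (isCoprime_mul_unit_left_right hu _ _).mpr (isCoprime_four_mul_sq_sub_one_two_mul p)
    rw [← mul_assoc, mul_comm u 2] at h2up
    exact h2up.mul_add_right_right q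
  exact hp.mul_left hm

end CommRing

theorem isCoprime_pSeq_of_succ (ε : ℕ → ℕ) (q : ℕ → ℤ) (h0 : IsCoprime (pSeq 0) (q 0))
    (hsucc : ∀ n, q (n + 1) = q n * (4 * pSeq n ^ 2 - 1) + 2 * (-1 : ℤ) ^ (ε n + 1) * pSeq n)
    (n : ℕ) : IsCoprime (pSeq n) (q n) := by
  induction n with
  | zero => exact h0
  | succ n ih => rw [hsucc]; exact ih.mul_four_mul_sq_sub_one (isUnit_neg_one.pow _)

theorem pSeq_coprime_qSeq_general (ε : ℕ → ℕ) (n : ℕ) :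
    IsCoprime (pSeq n) (qSeq ε n) ∧ IsCoprime (pSeq n) (q'Seq ε n) :=
  ⟨isCoprime_pSeq_of_succ ε _ ⟨1, -1, by norm_num [pSeq, qSeq]⟩ (fun _ => rfl) n,
    isCoprime_pSeq_of_succ ε _ ⟨0, -1, by norm_num [pSeq, q'Seq]⟩ (fun _ => rfl) n⟩

/-- For every sequence `ε : ℕ → {0,1}` and every `n ≥ 0`, the integers `p(n)` and `q_ε(n)` are
relatively prime, and the integers `p(n)` and `q'_ε(n)` are relatively prime. -/
theorem pSeq_coprime_qSeq (ε : ℕ → ℕ) (hε : ∀ j, ε j = 0 ∨ ε j = 1) (n : ℕ) :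
    IsCoprime (pSeq n) (qSeq ε n) ∧ IsCoprime (pSeq n) (q'Seq ε n) :=
  pSeq_coprime_qSeq_general ε n
end

section
/- For every n ≥ 0 and every sequence ε : ℕ → {0,1}: the integer p(n) is odd, p(n) ≥ 3, and −p(n) < q'_ε(n) < 0. -/
/-- Each step multiplies by `4 p² - 1`, which exceeds `2p`, so the correction `± 2p` cannot push
`q'` out of the scaled interval `(-p (4p² - 1), 0)`. -/
theorem mul_add_mem_Ioo_of_mem_Ioo {p q s : ℤ} (hp : 0 < p) (hq : q ∈ Set.Ioo (-p) 0)
    (hs : s = 1 ∨ s = -1) :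
    q * (4 * p ^ 2 - 1) + 2 * s * p ∈ Set.Ioo (-(p * (4 * p ^ 2 - 1))) 0 := by
  obtain ⟨hq_lo, hq_hi⟩ := hq
  have hq_le : q ≤ -1 := by omega
  have hq_ge : -p + 1 ≤ q := by omega
  rcases hs with rfl | rfl <;> constructor <;> nlinarith

theorem pSeq_odd (n : ℕ) : Odd (pSeq n) := by
  induction n with
  | zero => decide
  | succ n ih =>
    have h_factor : Odd (4 * pSeq n ^ 2 - 1) := ⟨2 * pSeq n ^ 2 - 1, by ring⟩
    exact ih.mul h_factor

theorem three_le_pSeq (n : ℕ) : 3 ≤ pSeq n := by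
  induction n with
  | zero => decide
  | succ n ih =>
    rw [pSeq]
    nlinarith

theorem q'Seq_mem_Ioo (ε : ℕ → ℕ) (n : ℕ) : q'Seq ε n ∈ Set.Ioo (-pSeq n) 0 := by
  induction n with
  | zero => norm_num [pSeq, q'Seq]
  | succ n ih =>
    rw [pSeq, q'Seq]
    exact mul_add_mem_Ioo_of_mem_Ioo (by linarith [three_le_pSeq n]) ih (neg_one_pow_eq_or ℤ _)

theorem pSeq_odd_ge_three_and_q'Seq_bounds_general (ε : ℕ → ℕ)
    (n : ℕ) :
    Odd (pSeq n) ∧ 3 ≤ pSeq n ∧ -pSeq n < q'Seq ε n ∧ q'Seq ε n < 0 := by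
  exact ⟨pSeq_odd n, three_le_pSeq n, q'Seq_mem_Ioo ε n⟩

/-- For every `n ≥ 0` and every sequence `ε : ℕ → {0,1}`: the integer `p(n)` is odd,
`p(n) ≥ 3`, and `−p(n) < q'_ε(n) < 0`. -/
theorem pSeq_odd_ge_three_and_q'Seq_bounds (ε : ℕ → ℕ) (hε : ∀ j, ε j = 0 ∨ ε j = 1)
    (n : ℕ) :
    Odd (pSeq n) ∧ 3 ≤ pSeq n ∧ -pSeq n < q'Seq ε n ∧ q'Seq ε n < 0 :=
  pSeq_odd_ge_three_and_q'Seq_bounds_general ε n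
end

section
/- Let p ≥ 1 be an integer and q ≥ 1 an odd integer. Then ∑_{k=0}^{2p−1} (−1)^{⌊q·k/p⌋} = 0. -/
/-! Shifting `k` by `p` adds the odd integer `q` to `q k / p`, hence flips the sign of
`(-1) ^ ⌊q k / p⌋`; the second half of the range `0 ≤ k < 2p` therefore cancels the first. -/

open Finset Function

theorem Function.Antiperiodic.sum_Ico_add_add_eq_zero {α β : Type*} [AddCommMonoid α]
    [LinearOrder α] [IsOrderedCancelAddMonoid α] [ExistsAddOfLE α] [LocallyFiniteOrder α]
    [AddCommGroup β] {f : α → β} {c : α} (hf : Antiperiodic f c) (hc : 0 ≤ c) (a : α) :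
    ∑ k ∈ Ico a (a + c + c), f k = 0 := by
  have hle : ∀ b : α, b ≤ b + c := fun b => le_add_of_nonneg_right hc
  rw [← Ico_union_Ico_eq_Ico (hle a) (hle (a + c)),
    sum_union (Ico_disjoint_Ico_consecutive _ _ _), ← map_add_right_Ico,
    hf.sum_map_addRightEmbedding, add_neg_cancel]

theorem antiperiodic_negOnePow_floor_mul_div {K : Type*} [Field K] [LinearOrder K]
    [IsStrictOrderedRing K] [FloorRing K] {p q : ℤ} (hp : p ≠ 0) (hq : Odd q) :
    Antiperiodic (fun k : ℤ => (⌊(q : K) * k / p⌋.negOnePow : ℤ)) p := by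
  intro k
  have hshift : (q : K) * ↑(k + p) / p = q * k / p + q := by
    have : (p : K) ≠ 0 := by exact_mod_cast hp
    push_cast
    field_simp
  simp only [hshift, Int.floor_add_intCast, Int.negOnePow_add, Int.negOnePow_odd _ hq,
    mul_neg, mul_one, Units.val_neg]

theorem sum_negOnePow_two_period_general (p q : ℤ) (hp : 1 ≤ p) (hqodd : Odd q) :
    ∑ k ∈ Finset.Icc (0 : ℤ) (2 * p - 1),
      ((⌊(q : ℚ) * (k : ℚ) / (p : ℚ)⌋).negOnePow : ℤ) = 0 := by
  have hrange : Icc (0 : ℤ) (2 * p - 1) = Ico 0 (0 + p + p) := by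
    rw [Icc_sub_one_right_eq_Ico]
    ring_nf
  rw [hrange]
  exact (antiperiodic_negOnePow_floor_mul_div (by omega) hqodd).sum_Ico_add_add_eq_zero
    (by omega) 0

/-- Let `p ≥ 1` be an integer and `q ≥ 1` an odd integer. Then
`∑_{k=0}^{2p−1} (−1)^{⌊q·k/p⌋} = 0`. -/
theorem sum_negOnePow_two_period (p q : ℤ) (hp : 1 ≤ p) (hq : 1 ≤ q) (hqodd : Odd q) :
    ∑ k ∈ Finset.Icc (0 : ℤ) (2 * p - 1),
      ((⌊(q : ℚ) * (k : ℚ) / (p : ℚ)⌋).negOnePow : ℤ) = 0 :=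
  sum_negOnePow_two_period_general p q hp hqodd
end

section
/- Let p ≥ 2 and q ≥ 1 be integers, set P = 4p³ − p and Q = (4p² − 1)q + 2p, and let k be an integer with 0 < k < P. Write m = ⌊k/(4p² − 1)⌋ and u = k − m(4p² − 1). Then ⌊Q·k/P⌋ = ⌊q·k/p⌋ + 2m + ⌊{q·k/p} + 2u/(4p² − 1)⌋, where {x} = x − ⌊x⌋ denotes the fractional part. Consequently (−1)^{⌊Q·k/P⌋} ≠ (−1)^{⌊q·k/p⌋} if and only if 1 ≤ {q·k/p} + 2u/(4p² − 1) < 2. -/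
/-!
Since `P = p (4p² − 1)` and `Q = (4p² − 1) q + 2p`, one has `Q k / P = q k / p + 2 k / (4p² − 1)`,
and `u / (4p² − 1)` is the fractional part of `k / (4p² − 1)`. Splitting both summands into integer
and fractional parts gives the floor identity. The remainder term `{q k / p} + 2 u / (4p² − 1)`
lies in `[0, 3)`, so its floor is `0`, `1` or `2`, and the parity changes exactly when it is `1`.
-/

theorem Int.floor_add_two_mul {α : Type*} [Ring α] [LinearOrder α] [IsOrderedRing α] [FloorRing α]
    (x y : α) :
    ⌊x + 2 * y⌋ = ⌊x⌋ + 2 * ⌊y⌋ + ⌊Int.fract x + 2 * Int.fract y⌋ := by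
  have hsplit : x + 2 * y = ((⌊x⌋ + 2 * ⌊y⌋ : ℤ) : α) + (Int.fract x + 2 * Int.fract y) := by
    push_cast [Int.fract]
    noncomm_ring
  rw [hsplit, Int.floor_intCast_add]

theorem Int.odd_floor_iff_of_nonneg_of_lt_three {α : Type*} [Ring α] [LinearOrder α]
    [FloorRing α] {z : α} (h0 : 0 ≤ z) (h3 : z < 3) :
    Odd ⌊z⌋ ↔ 1 ≤ z ∧ z < 2 := by
  have hlo : 0 ≤ ⌊z⌋ := Int.floor_nonneg.mpr h0
  have hhi : ⌊z⌋ < 3 := Int.floor_lt.mpr (by exact_mod_cast h3)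
  have hone : Odd ⌊z⌋ ↔ ⌊z⌋ = 1 := by
    constructor
    · rintro ⟨j, hj⟩
      omega
    · rintro h
      exact ⟨0, h⟩
  rw [hone, Int.floor_eq_iff]
  norm_num

theorem Int.fract_div_eq_sub_floor_mul_div {α : Type*} [Field α] [LinearOrder α] [FloorRing α]
    {x d : α} (hd : d ≠ 0) :
    Int.fract (x / d) = (x - ⌊x / d⌋ * d) / d := by
  rw [Int.fract, sub_div, mul_div_cancel_right₀ _ hd]

theorem mul_div_four_mul_pow_three_sub_self {K : Type*} [Field K] {p : K} (q k : K)
    (hp : p ≠ 0) (hD : 4 * p ^ 2 - 1 ≠ 0) :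
    ((4 * p ^ 2 - 1) * q + 2 * p) * k / (4 * p ^ 3 - p) = q * k / p + 2 * (k / (4 * p ^ 2 - 1)) := by
  have hP : 4 * p ^ 3 - p = p * (4 * p ^ 2 - 1) := by ring
  rw [hP]
  field_simp

theorem Int.negOnePow_add_two_mul_add_ne_iff (a b c : ℤ) :
    (a + 2 * b + c).negOnePow ≠ a.negOnePow ↔ Odd c := by
  rw [Int.negOnePow_add, Int.negOnePow_add, Int.negOnePow_two_mul, mul_one, ne_eq, mul_eq_left,
    Int.negOnePow_eq_one_iff, Int.not_even_iff_odd]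

theorem floor_decomposition_general (p q k P Q m u : ℤ) (hp : 2 ≤ p)
    (hP : P = 4 * p ^ 3 - p) (hQ : Q = (4 * p ^ 2 - 1) * q + 2 * p)
    (hm : m = ⌊(k : ℚ) / ((4 : ℚ) * (p : ℚ) ^ 2 - 1)⌋)
    (hu : u = k - m * (4 * p ^ 2 - 1)) :
    ⌊(Q : ℚ) * (k : ℚ) / (P : ℚ)⌋ =
      ⌊(q : ℚ) * (k : ℚ) / (p : ℚ)⌋ + 2 * m +
        ⌊Int.fract ((q : ℚ) * (k : ℚ) / (p : ℚ)) +
          2 * (u : ℚ) / ((4 : ℚ) * (p : ℚ) ^ 2 - 1)⌋ ∧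
    (((⌊(Q : ℚ) * (k : ℚ) / (P : ℚ)⌋).negOnePow : ℤ) ≠
        ((⌊(q : ℚ) * (k : ℚ) / (p : ℚ)⌋).negOnePow : ℤ) ↔
      1 ≤ Int.fract ((q : ℚ) * (k : ℚ) / (p : ℚ)) +
            2 * (u : ℚ) / ((4 : ℚ) * (p : ℚ) ^ 2 - 1) ∧
        Int.fract ((q : ℚ) * (k : ℚ) / (p : ℚ)) +
            2 * (u : ℚ) / ((4 : ℚ) * (p : ℚ) ^ 2 - 1) < 2) := by
  set x : ℚ := q * k / p
  set y : ℚ := k / (4 * p ^ 2 - 1)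
  have hp0 : (p : ℚ) ≠ 0 := by exact_mod_cast (by omega : p ≠ 0)
  -- `4p² − 1` is odd, hence nonzero.
  have hD0 : (4 * p ^ 2 - 1 : ℚ) ≠ 0 := by exact_mod_cast (by omega : 4 * p ^ 2 - 1 ≠ 0)
  have hratio : (Q : ℚ) * k / P = x + 2 * y := by
    subst hP hQ
    push_cast
    exact mul_div_four_mul_pow_three_sub_self _ _ hp0 hD0
  have hfract : 2 * (u : ℚ) / (4 * p ^ 2 - 1) = 2 * Int.fract y := by
    rw [Int.fract_div_eq_sub_floor_mul_div hD0, ← hm, hu, mul_div_assoc]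
    push_cast
    rfl
  have hfloor := Int.floor_add_two_mul x y
  rw [← hm, ← hratio, ← hfract] at hfloor
  refine ⟨hfloor, ?_⟩
  rw [hfloor, Units.val_injective.ne_iff, Int.negOnePow_add_two_mul_add_ne_iff]
  apply Int.odd_floor_iff_of_nonneg_of_lt_three
  · rw [hfract]
    positivity
  · rw [hfract]
    linarith [Int.fract_lt_one x, Int.fract_lt_one y]

/-- Let `p ≥ 2` and `q ≥ 1` be integers, set `P = 4p³ − p` and `Q = (4p² − 1)q + 2p`, and let
`k` be an integer with `0 < k < P`. Write `m = ⌊k/(4p² − 1)⌋` and `u = k − m(4p² − 1)`. Then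
`⌊Q·k/P⌋ = ⌊q·k/p⌋ + 2m + ⌊{q·k/p} + 2u/(4p² − 1)⌋`, where `{x}` denotes the fractional
part. Consequently `(−1)^{⌊Q·k/P⌋} ≠ (−1)^{⌊q·k/p⌋}` if and only if
`1 ≤ {q·k/p} + 2u/(4p² − 1) < 2`. -/
theorem floor_decomposition (p q k P Q m u : ℤ) (hp : 2 ≤ p) (hq : 1 ≤ q)
    (hP : P = 4 * p ^ 3 - p) (hQ : Q = (4 * p ^ 2 - 1) * q + 2 * p)
    (hk0 : 0 < k) (hkP : k < P)
    (hm : m = ⌊(k : ℚ) / ((4 : ℚ) * (p : ℚ) ^ 2 - 1)⌋)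
    (hu : u = k - m * (4 * p ^ 2 - 1)) :
    ⌊(Q : ℚ) * (k : ℚ) / (P : ℚ)⌋ =
      ⌊(q : ℚ) * (k : ℚ) / (p : ℚ)⌋ + 2 * m +
        ⌊Int.fract ((q : ℚ) * (k : ℚ) / (p : ℚ)) +
          2 * (u : ℚ) / ((4 : ℚ) * (p : ℚ) ^ 2 - 1)⌋ ∧
    (((⌊(Q : ℚ) * (k : ℚ) / (P : ℚ)⌋).negOnePow : ℤ) ≠
        ((⌊(q : ℚ) * (k : ℚ) / (p : ℚ)⌋).negOnePow : ℤ) ↔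
      1 ≤ Int.fract ((q : ℚ) * (k : ℚ) / (p : ℚ)) +
            2 * (u : ℚ) / ((4 : ℚ) * (p : ℚ) ^ 2 - 1) ∧
        Int.fract ((q : ℚ) * (k : ℚ) / (p : ℚ)) +
            2 * (u : ℚ) / ((4 : ℚ) * (p : ℚ) ^ 2 - 1) < 2) :=
  floor_decomposition_general p q k P Q m u hp hP hQ hm hu
end

section
/- Let m ≥ 1 be an odd integer and let A be an m×m symmetric matrix over ℤ such that every off-diagonal entry of A is 1 or −1 and every row of A sums to 0. Then for all indices i, j, the determinant of the (m−1)×(m−1) matrix obtained from A by deleting row i and column j is an odd integer; in particular every cofactor of A is nonzero. (Applied to the linking matrix of a dihedral covering link, this gives the nonvanishing H(1) = 𝓛_{ij} ≠ 0 of the Hosokawa polynomial at 1, via Hoste's formula and Cayley's theorem, since the cofactor equals ± the sum over the m^{m−2} spanning trees of the complete graph of the ±1 products of linking numbers.) -/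
/-!
Reduce modulo 2. Off-diagonal entries `±1` become `1`, and since each row sums to `0`, a diagonal
entry becomes the sum of the `m` off-diagonal ones, i.e. `m = 0`. So `A` reduces to the adjacency
matrix `N = J - I` of the complete graph on `m + 1` vertices, and it suffices that every minor of
`N` is invertible over `ZMod 2`. A kernel vector `v` of the minor obtained by deleting row `i` and
column `j`, extended by `0` at `j` to `w`, satisfies `(N w) x = ∑ w - w x = 0` for all `x ≠ i`.
Hence `w` is constant off `i`, and because `m = 0` the total `∑ w` forces `w i` to be the same
constant; as `w j = 0`, the constant is `0`, so `v = 0`.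
-/

open Matrix SimpleGraph

theorem Matrix.submatrix_succAbove_mulVec_apply {R : Type*} [NonUnitalNonAssocSemiring R]
    {m n : ℕ} (M : Matrix (Fin (m + 1)) (Fin (n + 1)) R) (i : Fin (m + 1)) (j : Fin (n + 1))
    (v : Fin n → R) (k : Fin m) :
    (M.submatrix i.succAbove j.succAbove *ᵥ v) k = (M *ᵥ Fin.insertNth j 0 v) (i.succAbove k) := by
  simp [mulVec, dotProduct, Fin.sum_univ_succAbove _ j]

namespace SimpleGraph

theorem adjMatrix_completeGraph_mulVec_apply {V R : Type*} [Fintype V] [DecidableEq V] [Ring R]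
    (w : V → R) (x : V) :
    ((completeGraph V).adjMatrix R *ᵥ w) x = ∑ y, w y - w x := by
  rw [adjMatrix_completeGraph_eq_of_one_sub_one, sub_mulVec, one_mulVec]
  simp [mulVec, dotProduct]

theorem eq_sum_of_adjMatrix_completeGraph_mulVec_eq_zero {R : Type*} [Ring R] {m : ℕ}
    (hm : (m : R) = 0) {i : Fin (m + 1)} {w : Fin (m + 1) → R}
    (hw : ∀ k, ((completeGraph (Fin (m + 1))).adjMatrix R *ᵥ w) (i.succAbove k) = 0)
    (x : Fin (m + 1)) : w x = ∑ y, w y := by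
  have h_succAbove (k : Fin m) : w (i.succAbove k) = ∑ y, w y := by
    rw [eq_comm, ← sub_eq_zero, ← hw k, adjMatrix_completeGraph_mulVec_apply]
  have h_self : w i = ∑ y, w y := by
    conv_rhs => rw [Fin.sum_univ_succAbove _ i]
    simp [h_succAbove, hm]
  obtain rfl | ⟨k, rfl⟩ := i.eq_self_or_eq_succAbove x
  exacts [h_self, h_succAbove k]

theorem det_submatrix_succAbove_adjMatrix_completeGraph_ne_zero {R : Type*} [CommRing R]
    [IsDomain R] {m : ℕ} (hm : (m : R) = 0) (i j : Fin (m + 1)) :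
    (((completeGraph (Fin (m + 1))).adjMatrix R).submatrix i.succAbove j.succAbove).det ≠ 0 := by
  rw [Ne, ← exists_mulVec_eq_zero_iff]
  rintro ⟨v, hv_ne, hv⟩
  have hw := eq_sum_of_adjMatrix_completeGraph_mulVec_eq_zero hm (w := Fin.insertNth j 0 v)
    fun k => by rw [← submatrix_succAbove_mulVec_apply, hv, Pi.zero_apply]
  have hsum : ∑ y, Fin.insertNth j 0 v y = 0 := by simpa using (hw j).symm
  exact hv_ne (funext fun l => by simpa [hsum] using hw (j.succAbove l))

end SimpleGraph

theorem Matrix.map_intCast_zmod_two_eq_adjMatrix_completeGraph {V : Type*} [Fintype V]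
    [DecidableEq V] (hV : Odd (Fintype.card V)) (A : Matrix V V ℤ)
    (hoff : ∀ i j, i ≠ j → A i j = 1 ∨ A i j = -1) (hrow : ∀ i, ∑ j, A i j = 0) :
    A.map (Int.cast : ℤ → ZMod 2) = (completeGraph V).adjMatrix (ZMod 2) := by
  have h_off {a b : V} (hab : a ≠ b) : (A a b : ZMod 2) = 1 := by
    rcases hoff a b hab with h | h <;> simp [h]
  ext a b
  by_cases hab : a = b
  · subst hab
    have hsum := congrArg (Int.cast : ℤ → ZMod 2) (hrow a)
    rw [Int.cast_sum, ← Finset.add_sum_erase _ _ (Finset.mem_univ a),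
      Finset.sum_congr rfl fun b hb => h_off (Finset.ne_of_mem_erase hb).symm] at hsum
    have hcard : Even (Fintype.card V - 1) := hV.tsub_odd odd_one
    simpa [hcard.natCast_zmod_two] using hsum
  · simp [h_off hab, hab]

theorem minor_det_odd_general (m : ℕ) (hm : Odd (m + 1)) (A : Matrix (Fin (m + 1)) (Fin (m + 1)) ℤ)
    (hoff : ∀ i j, i ≠ j → A i j = 1 ∨ A i j = -1)
    (hrow : ∀ i, ∑ j, A i j = 0) :
    ∀ i j : Fin (m + 1),
      Odd ((A.submatrix i.succAbove j.succAbove).det) ∧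
      (-1 : ℤ) ^ ((i : ℕ) + (j : ℕ)) * (A.submatrix i.succAbove j.succAbove).det ≠ 0 := by
  intro i j
  have hA := A.map_intCast_zmod_two_eq_adjMatrix_completeGraph (by simpa using hm) hoff hrow
  have hm_even : (m : ZMod 2) = 0 :=
    (Nat.not_odd_iff_even.mp (Nat.odd_add_one.mp hm)).natCast_zmod_two
  have hodd : Odd (A.submatrix i.succAbove j.succAbove).det := by
    rw [← Int.not_even_iff_odd, ← ZMod.intCast_eq_zero_iff_even, Int.cast_det, ← submatrix_map, hA]
    exact det_submatrix_succAbove_adjMatrix_completeGraph_ne_zero hm_even i j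
  exact ⟨hodd, mul_ne_zero (pow_ne_zero _ (by norm_num)) fun h => Int.not_odd_zero (h ▸ hodd)⟩

/-- Let `m ≥ 1` be an odd integer (here the matrix size is `m + 1` with `m + 1` odd) and let
`A` be a symmetric integer matrix such that every off-diagonal entry is `1` or `−1` and every
row sums to `0`. Then for all indices `i, j`, the determinant of the matrix obtained from `A`
by deleting row `i` and column `j` is odd; in particular every cofactor of `A` is nonzero. -/
theorem minor_det_odd (m : ℕ) (hm : Odd (m + 1)) (A : Matrix (Fin (m + 1)) (Fin (m + 1)) ℤ)
    (hsymm : A.transpose = A)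
    (hoff : ∀ i j, i ≠ j → A i j = 1 ∨ A i j = -1)
    (hrow : ∀ i, ∑ j, A i j = 0) :
    ∀ i j : Fin (m + 1),
      Odd ((A.submatrix i.succAbove j.succAbove).det) ∧
      (-1 : ℤ) ^ ((i : ℕ) + (j : ℕ)) * (A.submatrix i.succAbove j.succAbove).det ≠ 0 :=
  minor_det_odd_general m hm A hoff hrow
end
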